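/- For every positive integer P, if the sequence of principal coefficients (A_n(P))_n tends to +\infty as n \to \infty, then the sequence of adjustment coefficients (B_n(P))_n also tends to +\infty. -/
import Mathlib


open Filter

/-- The (accelerated) Collatz map `T(P) = P/2` if `P` even, `(3P+1)/2` if `P` odd. -/
def collatz (p : ℕ) : ℕ := if p % 2 = 0 then p / 2 else (3 * p + 1) / 2

/-- `collatzOddCount P n = m_n(P)`, the number of `k < n` with `T^k(P)` odd. -/
def collatzOddCount (P n : ℕ) : ℕ :=
  ((Finset.range n).filter fun k => collatz^[k] P % 2 = 1).card

/-- The principal coefficient `A_n(P) = 3^{m_n(P)} / 2^n`. -/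
noncomputable def collatzA (P n : ℕ) : ℝ := 3 ^ collatzOddCount P n / 2 ^ n

/-- The adjustment coefficient `B_n(P) = T^n(P) - A_n(P) * P`. -/
noncomputable def collatzB (P n : ℕ) : ℝ := (collatz^[n] P : ℝ) - collatzA P n * P

lemma collatzA_pos (P n : ℕ) : 0 < collatzA P n := by
  unfold collatzA; positivity

lemma collatzOddCount_succ (P n : ℕ) :
    collatzOddCount P (n + 1) =
      collatzOddCount P n + (if collatz^[n] P % 2 = 1 then 1 else 0) := by
  unfold collatzOddCount
  rw [Finset.range_add_one, Finset.filter_insert]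
  split <;> simp [Finset.card_insert_of_notMem, Finset.notMem_range_self]

lemma collatzA_even (P n : ℕ) (h : collatz^[n] P % 2 = 0) :
    collatzA P (n + 1) = collatzA P n / 2 := by
  unfold collatzA
  rw [collatzOddCount_succ, if_neg (by omega)]
  ring

lemma collatzA_odd (P n : ℕ) (h : collatz^[n] P % 2 = 1) :
    collatzA P (n + 1) = 3 * collatzA P n / 2 := by
  unfold collatzA
  rw [collatzOddCount_succ, if_pos h]
  ring

lemma collatzB_even (P n : ℕ) (h : collatz^[n] P % 2 = 0) :
    collatzB P (n + 1) = collatzB P n / 2 := by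
  unfold collatzB
  rw [Function.iterate_succ_apply', collatzA_even P n h]
  have h1 : collatz (collatz^[n] P) = collatz^[n] P / 2 := by
    rw [collatz, if_pos h]
  rw [h1, Nat.cast_div (Nat.dvd_of_mod_eq_zero h) (by norm_num)]
  push_cast
  ring

lemma collatzB_odd (P n : ℕ) (h : collatz^[n] P % 2 = 1) :
    collatzB P (n + 1) = (3 * collatzB P n + 1) / 2 := by
  unfold collatzB
  rw [Function.iterate_succ_apply', collatzA_odd P n h]
  have h1 : collatz (collatz^[n] P) = (3 * collatz^[n] P + 1) / 2 := by
    rw [collatz, if_neg (by omega)]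
  have hdvd : 2 ∣ 3 * collatz^[n] P + 1 := by omega
  rw [h1, Nat.cast_div hdvd (by norm_num)]
  push_cast
  ring

lemma collatzB_nonneg (P n : ℕ) : 0 ≤ collatzB P n := by
  induction n with
  | zero =>
    simp [collatzB, collatzA, collatzOddCount]
  | succ n ih =>
    rcases Nat.mod_two_eq_zero_or_one (collatz^[n] P) with h | h
    · rw [collatzB_even P n h]; linarith
    · rw [collatzB_odd P n h]; linarith

lemma collatz_ratio_mono (P : ℕ) : Monotone (fun n => collatzB P n / collatzA P n) := by
  apply monotone_nat_of_le_succ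
  intro n
  have hApos := collatzA_pos P n
  have hApos' := collatzA_pos P (n + 1)
  rcases Nat.mod_two_eq_zero_or_one (collatz^[n] P) with h | h
  · rw [collatzB_even P n h, collatzA_even P n h]
    have heq : collatzB P n / 2 / (collatzA P n / 2) = collatzB P n / collatzA P n := by
      rw [div_div_div_cancel_right₀]
      norm_num
    rw [heq]
  · rw [collatzB_odd P n h, collatzA_odd P n h]
    rw [div_le_div_iff₀ hApos (by linarith)]
    ring_nf
    nlinarith [collatzB_nonneg P n]

theorem stmt_6 (P : ℕ) (hP : 0 < P)
    (hA : Tendsto (fun n => collatzA P n) atTop atTop) :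
    Tendsto (fun n => collatzB P n) atTop atTop := by
  -- there is some odd iterate
  have hodd : ∃ k, collatz^[k] P % 2 = 1 := by
    by_contra hc
    push_neg at hc
    have hall : ∀ n, collatzA P n ≤ 1 := by
      intro n
      have : collatzOddCount P n = 0 := by
        unfold collatzOddCount
        rw [Finset.card_eq_zero, Finset.filter_eq_empty_iff]
        intro k _; exact hc k
      unfold collatzA
      rw [this]
      rw [pow_zero]
      rw [div_le_one (by positivity)]
      exact one_le_pow₀ (by norm_num)
    obtain ⟨n, hn⟩ := (tendsto_atTop.mp hA 2).exists
    linarith [hall n]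
  obtain ⟨k, hk⟩ := hodd
  set c := collatzB P (k + 1) / collatzA P (k + 1) with hc
  have hcpos : 0 < c := by
    apply div_pos _ (collatzA_pos P (k + 1))
    rw [collatzB_odd P k hk]
    linarith [collatzB_nonneg P k]
  have key : ∀ n ≥ k + 1, c * collatzA P n ≤ collatzB P n := by
    intro n hn
    have := collatz_ratio_mono P hn
    have hApos := collatzA_pos P n
    calc c * collatzA P n ≤ (collatzB P n / collatzA P n) * collatzA P n := by
          apply mul_le_mul_of_nonneg_right this hApos.le
      _ = collatzB P n := by field_simp
  apply tendsto_atTop_mono' atTop (Eventually.mono (eventually_ge_atTop (k+1)) key)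
  exact hA.const_mul_atTop hcpos
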